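/- Flip automata networks have invariant histories: for any initial configuration, the sequence of state values taken by each individual node (recording only actual state changes, in order) is independent of the choice of fair update schedule. -/

import Mathlib

open scoped Classical

/-- A flip automata network. -/
structure FAN (I S : Type*) where
  G : SimpleGraph I
  flip : I → (I → S) → S × (I → Bool)

abbrev FanConfig (I S : Type*) := (I → S) × (I → I → Bool)

def FAN.Applicable {I S : Type*} (net : FAN I S) (cfg : FanConfig I S) (v : I) : Prop :=
  ∀ u, net.G.Adj u v → cfg.2 u v = true

noncomputable def FAN.updateSet {I S : Type*} (net : FAN I S) (D : Set I)
    (cfg : FanConfig I S) : FanConfig I S :=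
  ( fun i => if i ∈ D then (net.flip i cfg.1).1 else cfg.1 i,
    fun i j =>
      if (i ∈ D ∧ (net.flip i cfg.1).2 j = true) ∨ (j ∈ D ∧ (net.flip j cfg.1).2 i = true)
      then !(cfg.2 i j) else cfg.2 i j )

/-- One step of a fair schedule: simultaneously update all applicable nodes of the
chosen subset. -/
noncomputable def FAN.stepSet {I S : Type*} (net : FAN I S) (D : Set I)
    (cfg : FanConfig I S) : FanConfig I S :=
  net.updateSet {v | v ∈ D ∧ net.Applicable cfg v} cfg

/-- Trajectory under an update schedule `ζ`. -/
noncomputable def FAN.traj {I S : Type*} (net : FAN I S) (ζ : ℕ → Set I)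
    (cfg : FanConfig I S) : ℕ → FanConfig I S
  | 0 => cfg
  | t + 1 => net.stepSet (ζ t) (FAN.traj net ζ cfg t)

/-- The predicate `p` on ℕ holds at least `n` times. -/
def HasAtLeast (p : ℕ → Prop) (n : ℕ) : Prop :=
  {t | p t}.Infinite ∨ n < {t | p t}.ncard

/-- The `n`-th value of the deduplicated (update-history) sequence of `g : ℕ → S`:
`histVal g 0` is the initial value, and `histVal g (n+1)` is the value right after the
`n`-th actual change. -/
noncomputable def histVal {S : Type*} (g : ℕ → S) : ℕ → S
  | 0 => g 0
  | n + 1 => g (Nat.nth (fun t => g (t + 1) ≠ g t) n + 1)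


/-!
Adjacent nodes never fire at the same step, and an applicable node stays applicable until it
fires: its neighbours cannot fire while their shared edges point towards it. The orientation of
an edge is its initial orientation flipped once for each firing of an endpoint that flips it.

Fix two fair runs. By strong induction on time in the first run, the `k`-th firing of every
node `v` is matched by the `k`-th firing of `v` in the second run, with the same state at `v`
and at its neighbours, and with every neighbour having fired equally often. A neighbour cannot
be ahead in the second run, since its extra firing would need the shared edge to point away
from `v`. It cannot be behind forever either: by local finiteness all neighbours catch up at
some time, then `v` is applicable and by fairness fires. Hence the firings of a node that
change its state have the same indices and produce the same values in both runs.
-/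

namespace Nat

variable {p q : ℕ → Prop}

theorem exists_count_eq_of_count_le_of_lt_count {a b k : ℕ} (ha : count p a ≤ k)
    (hb : k < count p b) : ∃ s, a ≤ s ∧ s < b ∧ p s ∧ count p s = k := by
  have hk : ∀ hf : (Set.ofPred p).Finite, k < hf.toFinset.card :=
    fun hf => hb.trans_le (count_le_card hf b)
  refine ⟨nth p k, ?_, nth_lt_of_lt_count hb, nth_mem k hk, count_nth hk⟩
  by_contra! h
  have := count_strict_mono (nth_mem k hk) h
  rw [count_nth hk] at this
  omega

theorem exists_count_eq_of_lt_count {b k : ℕ} (hb : k < count p b) :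
    ∃ s < b, p s ∧ count p s = k := by
  obtain ⟨s, -, hsb, hs⟩ := exists_count_eq_of_count_le_of_lt_count (a := 0) (by simp) hb
  exact ⟨s, hsb, hs⟩

theorem count_mem_image_count (hqp : ∀ t, q t → p t) (t : ℕ) :
    count (· ∈ count p '' {s | q s}) (count p t) = count q t := by
  induction t with
  | zero => simp
  | succ t ih =>
    by_cases hp : p t
    · have hmem : count p t ∈ count p '' {s | q s} ↔ q t :=
        ⟨fun ⟨s, hs, he⟩ => count_injective (hqp s hs) hp he ▸ hs,
          fun h => ⟨t, h, rfl⟩⟩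
      rw [count_succ_eq_succ_count_iff.2 hp, count_succ, count_succ, ih]
      simp only [hmem]
    · rw [count_succ_eq_count_iff.2 hp, count_succ_eq_count_iff.2 (fun h => hp (hqp t h)), ih]

theorem nth_image_count (hqp : ∀ t, q t → p t) {s : ℕ} (hs : q s) :
    nth (· ∈ count p '' {t | q t}) (count q s) = count p s := by
  rw [← count_mem_image_count hqp s]
  exact nth_count ⟨s, hs, rfl⟩

end Nat

theorem hasAtLeast_image_iff {p : ℕ → Prop} {f : ℕ → ℕ} (hf : Set.InjOn f {t | p t})
    (n : ℕ) :
    HasAtLeast (· ∈ f '' {t | p t}) n ↔ HasAtLeast p n := by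
  unfold HasAtLeast
  rw [Set.ofPred_mem_eq, Set.infinite_image_iff hf, hf.ncard_image]

theorem HasAtLeast.nth_spec {p : ℕ → Prop} {m : ℕ} (h : HasAtLeast p (m + 1)) :
    p (Nat.nth p m) ∧ Nat.count p (Nat.nth p m) = m := by
  have hm : ∀ hf : (Set.ofPred p).Finite, m < hf.toFinset.card := by
    intro hf
    rcases h with h | h
    · exact absurd hf h
    · rw [Set.ncard_eq_toFinset_card _ hf] at h
      omega
  exact ⟨Nat.nth_mem m hm, Nat.count_nth hm⟩

namespace FAN

variable {I S : Type*}

section OneRun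

def Oriented (net : FAN I S) (cfg : FanConfig I S) : Prop :=
  ∀ i j, net.G.Adj i j → cfg.2 i j = !cfg.2 j i

def IsLocal (net : FAN I S) : Prop :=
  ∀ i (s s' : I → S), s i = s' i → (∀ u, net.G.Adj u i → s u = s' u) →
    net.flip i s = net.flip i s'

theorem Oriented.updateSet {net : FAN I S} {cfg : FanConfig I S} (h : net.Oriented cfg)
    (D : Set I) : net.Oriented (net.updateSet D cfg) := by
  intro i j hij
  simp only [FAN.updateSet]
  rw [h i j hij]
  split_ifs <;> first | rfl | tauto

theorem Oriented.not_applicable {net : FAN I S} {cfg : FanConfig I S} (h : net.Oriented cfg)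
    {u v : I} (hadj : net.G.Adj u v) (hu : net.Applicable cfg u) : ¬ net.Applicable cfg v := by
  intro hv
  have := h u v hadj
  rw [hv u hadj, hu v hadj.symm] at this
  exact Bool.noConfusion this

variable (net : FAN I S) (ζ : ℕ → Set I) (cfg : FanConfig I S)

def Fires (v : I) (t : ℕ) : Prop :=
  v ∈ ζ t ∧ net.Applicable (net.traj ζ cfg t) v

noncomputable def firingRecord (v : I) (t : ℕ) : S × S × (I → Bool) :=
  ((net.traj ζ cfg t).1 v, net.flip v (net.traj ζ cfg t).1)

def FiresWith (φ : S × S × (I → Bool) → Prop) (v : I) (t : ℕ) : Prop :=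
  net.Fires ζ cfg v t ∧ φ (net.firingRecord ζ cfg v t)

def firingIndices (φ : S × S × (I → Bool) → Prop) (v : I) : Set ℕ :=
  Nat.count (net.Fires ζ cfg v) '' {t | net.FiresWith ζ cfg φ v t}

theorem traj_succ_fst_apply (t : ℕ) (v : I) :
    (net.traj ζ cfg (t + 1)).1 v =
      if net.Fires ζ cfg v t then (net.flip v (net.traj ζ cfg t).1).1
      else (net.traj ζ cfg t).1 v :=
  rfl

theorem traj_succ_snd_apply (t : ℕ) (u v : I) :
    (net.traj ζ cfg (t + 1)).2 u v =
      if (net.Fires ζ cfg u t ∧ (net.flip u (net.traj ζ cfg t).1).2 v = true) ∨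
         (net.Fires ζ cfg v t ∧ (net.flip v (net.traj ζ cfg t).1).2 u = true)
      then !(net.traj ζ cfg t).2 u v else (net.traj ζ cfg t).2 u v :=
  rfl

variable {net cfg}

theorem Oriented.traj (hor : net.Oriented cfg) (t : ℕ) : net.Oriented (net.traj ζ cfg t) := by
  induction t with
  | zero => exact hor
  | succ t ih => exact ih.updateSet _

theorem Oriented.not_fires (hor : net.Oriented cfg) {t : ℕ} {u v : I} (hadj : net.G.Adj u v)
    (hu : net.Fires ζ cfg u t) : ¬ net.Fires ζ cfg v t :=
  fun hv => (hor.traj ζ t).not_applicable hadj hu.2 hv.2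

theorem not_fires_of_count_eq {a b s : ℕ} {v : I}
    (h : Nat.count (net.Fires ζ cfg v) a = Nat.count (net.Fires ζ cfg v) b) (has : a ≤ s)
    (hsb : s < b) : ¬ net.Fires ζ cfg v s := fun hs => by
  have := Nat.count_strict_mono hs hsb
  have := Nat.count_monotone (net.Fires ζ cfg v) has
  omega

theorem traj_fst_eq_of_count_eq {a b : ℕ} {v : I} (hab : a ≤ b)
    (h : Nat.count (net.Fires ζ cfg v) a = Nat.count (net.Fires ζ cfg v) b) :
    (net.traj ζ cfg b).1 v = (net.traj ζ cfg a).1 v := by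
  induction b, hab using Nat.le_induction with
  | base => rfl
  | succ b hab ih =>
    have := Nat.count_monotone (net.Fires ζ cfg v) hab
    have := Nat.count_monotone (net.Fires ζ cfg v) (Nat.le_add_right b 1)
    rw [traj_succ_fst_apply, if_neg (not_fires_of_count_eq ζ h hab b.lt_succ_self), ih (by omega)]

theorem Oriented.applicable_succ (hor : net.Oriented cfg) {t : ℕ} {v : I}
    (happ : net.Applicable (net.traj ζ cfg t) v) (hv : ¬ net.Fires ζ cfg v t) :
    net.Applicable (net.traj ζ cfg (t + 1)) v := by
  intro u hadj
  rw [traj_succ_snd_apply, if_neg]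
  · exact happ u hadj
  · rintro (⟨hu, -⟩ | ⟨hv', -⟩)
    · exact (hor.traj ζ t).not_applicable hadj hu.2 happ
    · exact hv hv'

theorem Oriented.exists_fires_of_applicable (hor : net.Oriented cfg)
    (hfair : ∀ i, {t | i ∈ ζ t}.Infinite) {t : ℕ} {v : I}
    (happ : net.Applicable (net.traj ζ cfg t) v) :
    ∃ s, t ≤ s ∧ net.Fires ζ cfg v s ∧
      Nat.count (net.Fires ζ cfg v) s = Nat.count (net.Fires ζ cfg v) t := by
  obtain ⟨m, hm, htm⟩ := (hfair v).exists_gt t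
  obtain ⟨d, rfl⟩ := Nat.exists_eq_add_of_le htm.le
  clear htm
  induction d generalizing t with
  | zero => exact ⟨t, le_rfl, ⟨hm, happ⟩, rfl⟩
  | succ d ih =>
    by_cases hvt : v ∈ ζ t
    · exact ⟨t, le_rfl, ⟨hvt, happ⟩, rfl⟩
    have hnf : ¬ net.Fires ζ cfg v t := fun h => hvt h.1
    obtain ⟨s, hts, hs, hcount⟩ := ih (hor.applicable_succ ζ happ hnf)
      (by rwa [Nat.add_right_comm, add_assoc])
    exact ⟨s, by omega, hs, hcount.trans (Nat.count_succ_eq_count_iff.2 hnf)⟩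

theorem Oriented.traj_snd_apply_eq_xor (hor : net.Oriented cfg) {u v : I}
    (hadj : net.G.Adj u v) (τ : ℕ) :
    (net.traj ζ cfg τ).2 u v =
      xor (xor (Nat.count (net.FiresWith ζ cfg (·.2.2 v = true) u) τ).bodd
        (Nat.count (net.FiresWith ζ cfg (·.2.2 u = true) v) τ).bodd) (cfg.2 u v) := by
  induction τ with
  | zero => simp [FAN.traj]
  | succ τ ih =>
    -- `updateSet` flips an edge only once when both endpoints ask for it
    have hboth : ¬ (net.FiresWith ζ cfg (·.2.2 v = true) u τ ∧
        net.FiresWith ζ cfg (·.2.2 u = true) v τ) :=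
      fun h => hor.not_fires ζ hadj h.1.1 h.2.1
    rw [traj_succ_snd_apply, Nat.count_succ, Nat.count_succ, ih]
    simp only [FiresWith, firingRecord] at hboth ⊢
    by_cases hu : net.Fires ζ cfg u τ ∧ (net.flip u (net.traj ζ cfg τ).1).2 v = true <;>
      by_cases hv : net.Fires ζ cfg v τ ∧ (net.flip v (net.traj ζ cfg τ).1).2 u = true
    · exact absurd ⟨hu, hv⟩ hboth
    all_goals simp [hu, hv]

theorem mem_firingIndices_iff {φ : S × S × (I → Bool) → Prop} {v : I} {s : ℕ}
    (hs : net.Fires ζ cfg v s) :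
    Nat.count (net.Fires ζ cfg v) s ∈ net.firingIndices ζ cfg φ v ↔
      φ (net.firingRecord ζ cfg v s) :=
  ⟨fun ⟨_, ht, he⟩ => Nat.count_injective ht.1 hs he ▸ ht.2,
    fun h => ⟨s, ⟨hs, h⟩, rfl⟩⟩

theorem traj_succ_fst_apply_of_fires {v : I} {s : ℕ} (hs : net.Fires ζ cfg v s) :
    (net.traj ζ cfg (s + 1)).1 v = (net.firingRecord ζ cfg v s).2.1 := by
  rw [traj_succ_fst_apply, if_pos hs]
  rfl

theorem traj_fst_eq_of_fires_of_count_eq_succ {v : I} {s τ : ℕ}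
    (hs : net.Fires ζ cfg v s)
    (hτ : Nat.count (net.Fires ζ cfg v) τ = Nat.count (net.Fires ζ cfg v) s + 1) :
    (net.traj ζ cfg τ).1 v = (net.firingRecord ζ cfg v s).2.1 := by
  have hsucc := Nat.count_succ_eq_succ_count_iff.2 hs
  have hsτ : s + 1 ≤ τ := Nat.lt_of_count_lt_count (p := net.Fires ζ cfg v) (by omega)
  rw [traj_fst_eq_of_count_eq ζ hsτ (by omega), traj_succ_fst_apply_of_fires ζ hs]

theorem traj_succ_fst_ne_iff {v : I} (t : ℕ) :
    (net.traj ζ cfg (t + 1)).1 v ≠ (net.traj ζ cfg t).1 v ↔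
      net.FiresWith ζ cfg (fun r => r.2.1 ≠ r.1) v t := by
  rw [traj_succ_fst_apply]
  by_cases h : net.Fires ζ cfg v t <;> simp [h, FiresWith, firingRecord]

theorem hasAtLeast_firingIndices_iff {φ : S × S × (I → Bool) → Prop} {v : I} (n : ℕ) :
    HasAtLeast (· ∈ net.firingIndices ζ cfg φ v) n ↔
      HasAtLeast (net.FiresWith ζ cfg φ v) n :=
  hasAtLeast_image_iff (fun _ hs _ ht h => Nat.count_injective hs.1 ht.1 h) n

theorem firesWith_nth_of_hasAtLeast {φ : S × S × (I → Bool) → Prop} {v : I} {m : ℕ}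
    (h : HasAtLeast (net.FiresWith ζ cfg φ v) (m + 1)) :
    net.FiresWith ζ cfg φ v (Nat.nth (net.FiresWith ζ cfg φ v) m) ∧
      Nat.count (net.Fires ζ cfg v) (Nat.nth (net.FiresWith ζ cfg φ v) m) =
        Nat.nth (· ∈ net.firingIndices ζ cfg φ v) m := by
  obtain ⟨hs, hcs⟩ := h.nth_spec
  have := Nat.nth_image_count (p := net.Fires ζ cfg v) (fun _ ht => ht.1) hs
  rw [hcs] at this
  exact ⟨hs, this.symm⟩

end OneRun

section TwoRuns

variable {net : FAN I S} {ζ ζ' : ℕ → Set I} {cfg : FanConfig I S}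

variable (net ζ ζ' cfg) in
def FiringsMatch (v : I) (k : ℕ) : Prop :=
  ∃ s s', net.Fires ζ cfg v s ∧ net.Fires ζ' cfg v s' ∧
    Nat.count (net.Fires ζ cfg v) s = k ∧ Nat.count (net.Fires ζ' cfg v) s' = k ∧
    net.firingRecord ζ cfg v s = net.firingRecord ζ' cfg v s' ∧
    ∀ u, net.G.Adj u v → Nat.count (net.Fires ζ cfg u) s = Nat.count (net.Fires ζ' cfg u) s'

theorem FiringsMatch.mem_firingIndices_iff {v : I} {k : ℕ} (h : net.FiringsMatch ζ ζ' cfg v k)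
    (φ : S × S × (I → Bool) → Prop) :
    k ∈ net.firingIndices ζ cfg φ v ↔ k ∈ net.firingIndices ζ' cfg φ v := by
  obtain ⟨s, s', hs, hs', rfl, hk, hrec, -⟩ := h
  rw [FAN.mem_firingIndices_iff ζ hs, ← hk, FAN.mem_firingIndices_iff ζ' hs', hrec]

theorem count_firesWith_eq_of_firingsMatch {w : I} {τ τ' : ℕ}
    (hc : Nat.count (net.Fires ζ cfg w) τ = Nat.count (net.Fires ζ' cfg w) τ')
    (hm : ∀ m < Nat.count (net.Fires ζ cfg w) τ, net.FiringsMatch ζ ζ' cfg w m)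
    (φ : S × S × (I → Bool) → Prop) :
    Nat.count (net.FiresWith ζ cfg φ w) τ = Nat.count (net.FiresWith ζ' cfg φ w) τ' := by
  rw [← Nat.count_mem_image_count (q := net.FiresWith ζ cfg φ w) (fun _ ht => ht.1),
    ← Nat.count_mem_image_count (q := net.FiresWith ζ' cfg φ w) (fun _ ht => ht.1), ← hc]
  exact le_antisymm (Nat.count_mono_left fun m hm' => ((hm m hm').mem_firingIndices_iff φ).1)
    (Nat.count_mono_left fun m hm' => ((hm m hm').mem_firingIndices_iff φ).2)

theorem traj_fst_eq_of_firingsMatch {w : I} {τ τ' : ℕ}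
    (hc : Nat.count (net.Fires ζ cfg w) τ = Nat.count (net.Fires ζ' cfg w) τ')
    (hm : ∀ m < Nat.count (net.Fires ζ cfg w) τ, net.FiringsMatch ζ ζ' cfg w m) :
    (net.traj ζ cfg τ).1 w = (net.traj ζ' cfg τ').1 w := by
  rcases Nat.eq_zero_or_pos (Nat.count (net.Fires ζ cfg w) τ) with h0 | hpos
  · rw [traj_fst_eq_of_count_eq ζ (Nat.zero_le τ) (by simp [h0]),
      traj_fst_eq_of_count_eq ζ' (Nat.zero_le τ') (by rw [← hc, h0]; rfl)]
    rfl
  · obtain ⟨s, s', hs, hs', hcs, hcs', hrec, -⟩ := hm _ (Nat.sub_lt hpos one_pos)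
    rw [traj_fst_eq_of_fires_of_count_eq_succ ζ hs (by omega),
      traj_fst_eq_of_fires_of_count_eq_succ ζ' hs' (by omega), hrec]

theorem exists_count_eq_of_firingsMatch {w : I} {t : ℕ}
    (hm : ∀ m < Nat.count (net.Fires ζ cfg w) t, net.FiringsMatch ζ ζ' cfg w m) :
    ∃ t', Nat.count (net.Fires ζ' cfg w) t' = Nat.count (net.Fires ζ cfg w) t := by
  rcases Nat.eq_zero_or_pos (Nat.count (net.Fires ζ cfg w) t) with h0 | hpos
  · exact ⟨0, by simp [h0]⟩
  · obtain ⟨-, s', -, hs', -, hcs', -⟩ := hm _ (Nat.sub_lt hpos one_pos)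
    exact ⟨s' + 1, by rw [Nat.count_succ_eq_succ_count_iff.2 hs', hcs']; omega⟩

theorem Oriented.traj_snd_eq_of_firingsMatch (hor : net.Oriented cfg) {u v : I}
    (hadj : net.G.Adj u v) {τ τ' : ℕ}
    (hcu : Nat.count (net.Fires ζ cfg u) τ = Nat.count (net.Fires ζ' cfg u) τ')
    (hcv : Nat.count (net.Fires ζ cfg v) τ = Nat.count (net.Fires ζ' cfg v) τ')
    (hmu : ∀ m < Nat.count (net.Fires ζ cfg u) τ, net.FiringsMatch ζ ζ' cfg u m)
    (hmv : ∀ m < Nat.count (net.Fires ζ cfg v) τ, net.FiringsMatch ζ ζ' cfg v m) :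
    (net.traj ζ cfg τ).2 u v = (net.traj ζ' cfg τ').2 u v := by
  rw [hor.traj_snd_apply_eq_xor ζ hadj, hor.traj_snd_apply_eq_xor ζ' hadj,
    count_firesWith_eq_of_firingsMatch hcu hmu, count_firesWith_eq_of_firingsMatch hcv hmv]

variable (net ζ ζ' cfg) in
def MatchedBefore (t : ℕ) : Prop :=
  ∀ w, ∀ m < Nat.count (net.Fires ζ cfg w) t, net.FiringsMatch ζ ζ' cfg w m

theorem MatchedBefore.exists_fires_of_count_le {t s' : ℕ} {u v : I}
    (hM : net.MatchedBefore ζ ζ' cfg t) (hor : net.Oriented cfg) (hv : net.Fires ζ cfg v t)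
    (hadj : net.G.Adj u v)
    (hcu : Nat.count (net.Fires ζ' cfg u) s' = Nat.count (net.Fires ζ cfg u) t)
    (hj : Nat.count (net.Fires ζ' cfg v) s' ≤ Nat.count (net.Fires ζ cfg v) t) :
    ∃ s ≤ t, net.Fires ζ cfg v s ∧
      Nat.count (net.Fires ζ cfg v) s = Nat.count (net.Fires ζ' cfg v) s' ∧
      Nat.count (net.Fires ζ cfg u) s = Nat.count (net.Fires ζ cfg u) t := by
  obtain ⟨σ, hσt, hσu, hσv⟩ : ∃ σ ≤ t,
      Nat.count (net.Fires ζ cfg u) σ = Nat.count (net.Fires ζ cfg u) t ∧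
      Nat.count (net.Fires ζ cfg v) σ ≤ Nat.count (net.Fires ζ' cfg v) s' := by
    rcases Nat.eq_zero_or_pos (Nat.count (net.Fires ζ cfg u) t) with h0 | hpos
    · exact ⟨0, Nat.zero_le t, by simp [h0], by simp⟩
    -- just after the last firing of `u`, the count of `v` is the one recorded by the match
    obtain ⟨σ, σ', hσ, -, hcσ, hcσ', -, hnbr⟩ := hM u _ (Nat.sub_lt hpos one_pos)
    have hσt : σ < t := Nat.lt_of_count_lt_count (p := net.Fires ζ cfg u) (by omega)
    have hσ's' : σ' ≤ s' := (Nat.lt_of_count_lt_count (p := net.Fires ζ' cfg u) (by omega)).le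
    have hvσ := Nat.count_succ_eq_count_iff.2 (hor.not_fires ζ hadj hσ)
    have := Nat.count_monotone (net.Fires ζ' cfg v) hσ's'
    refine ⟨σ + 1, hσt, ?_, ?_⟩
    · rw [Nat.count_succ_eq_succ_count_iff.2 hσ]
      omega
    · rw [hvσ, hnbr v hadj.symm]
      exact this
  rcases hj.lt_or_eq with hlt | heq
  · obtain ⟨s, hσs, hst, hs, hcs⟩ := Nat.exists_count_eq_of_count_le_of_lt_count hσv hlt
    have := Nat.count_monotone (net.Fires ζ cfg u) hσs
    have := Nat.count_monotone (net.Fires ζ cfg u) hst.le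
    exact ⟨s, hst.le, hs, hcs, by omega⟩
  · exact ⟨t, le_rfl, hv, heq.symm, rfl⟩

theorem MatchedBefore.count_lt_of_neighbor_fires {t s' : ℕ} {u v : I}
    (hM : net.MatchedBefore ζ ζ' cfg t) (hor : net.Oriented cfg) (hv : net.Fires ζ cfg v t)
    (hadj : net.G.Adj u v) (hu : net.Fires ζ' cfg u s')
    (hcu : Nat.count (net.Fires ζ' cfg u) s' = Nat.count (net.Fires ζ cfg u) t) :
    Nat.count (net.Fires ζ cfg v) t < Nat.count (net.Fires ζ' cfg v) s' := by
  -- otherwise the edge `uv` at time `s'` of `ζ'` is that of a firing of `v` in `ζ`,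
  -- so it points towards `v` while `u` fires
  by_contra! hj
  obtain ⟨s, -, hs, hsv, hsu⟩ := hM.exists_fires_of_count_le hor hv hadj hcu hj
  have hedge := hor.traj_snd_eq_of_firingsMatch hadj (hsu.trans hcu.symm) hsv
    (fun m hm => hM u m (hsu ▸ hm)) (fun m hm => hM v m (by omega))
  rw [hs.2 u hadj, (hor.traj ζ' s') u v hadj, hu.2 v hadj.symm] at hedge
  exact Bool.noConfusion hedge

theorem MatchedBefore.count_neighbor_eq {t s' : ℕ} {u v : I}
    (hM : net.MatchedBefore ζ ζ' cfg t) (hor : net.Oriented cfg) (hv : net.Fires ζ cfg v t)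
    (hv' : net.Fires ζ' cfg v s')
    (hcv : Nat.count (net.Fires ζ' cfg v) s' = Nat.count (net.Fires ζ cfg v) t)
    (hadj : net.G.Adj u v) :
    Nat.count (net.Fires ζ cfg u) t = Nat.count (net.Fires ζ' cfg u) s' := by
  rcases lt_trichotomy (Nat.count (net.Fires ζ' cfg u) s') (Nat.count (net.Fires ζ cfg u) t)
    with hlt | heq | hgt
  · obtain ⟨σ, σ', -, hσ', hcσ, hcσ', -, hnbr⟩ := hM u _ hlt
    have hs'σ' : s' < σ' := by
      by_contra! h
      rcases h.lt_or_eq with h | rfl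
      · exact (Nat.count_strict_mono hσ' h).ne hcσ'
      · exact hor.not_fires ζ' hadj hσ' hv'
    have hσt : σ < t := Nat.lt_of_count_lt_count (p := net.Fires ζ cfg u) (by omega)
    have := Nat.count_strict_mono hv' hs'σ'
    have := Nat.count_monotone (net.Fires ζ cfg v) hσt.le
    have := hnbr v hadj.symm
    omega
  · exact heq.symm
  · obtain ⟨s, hss', hs, hcs⟩ := Nat.exists_count_eq_of_lt_count hgt
    have := hM.count_lt_of_neighbor_fires hor hv hadj hs hcs
    have := Nat.count_monotone (net.Fires ζ' cfg v) hss'.le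
    omega

theorem MatchedBefore.exists_fires_count_eq {t : ℕ} {v : I}
    (hM : net.MatchedBefore ζ ζ' cfg t) (hor : net.Oriented cfg)
    (hlf : ∀ v, (net.G.neighborSet v).Finite) (hfair' : ∀ i, {t | i ∈ ζ' t}.Infinite)
    (hv : net.Fires ζ cfg v t) :
    ∃ s', net.Fires ζ' cfg v s' ∧
      Nat.count (net.Fires ζ' cfg v) s' = Nat.count (net.Fires ζ cfg v) t := by
  by_contra! hno
  have hbound :
      ∀ τ, Nat.count (net.Fires ζ' cfg v) τ ≤ Nat.count (net.Fires ζ cfg v) t := by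
    intro τ
    by_contra! h
    obtain ⟨s, -, hs, hcs⟩ := Nat.exists_count_eq_of_lt_count h
    exact hno s hs hcs
  -- a time of the run `ζ'` at which `v` and all of its neighbours have caught up with time `t`
  obtain ⟨a, ha⟩ := exists_count_eq_of_firingsMatch (hM v)
  choose! b hb using fun u (_ : u ∈ net.G.neighborSet v) => exists_count_eq_of_firingsMatch (hM u)
  obtain ⟨B, hB⟩ := ((hlf v).image b).bddAbove
  set T := max a B
  have hTv : Nat.count (net.Fires ζ' cfg v) T = Nat.count (net.Fires ζ cfg v) t :=
    le_antisymm (hbound T) (ha ▸ Nat.count_monotone _ (le_max_left a B))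
  have hTu : ∀ u, net.G.Adj u v →
      Nat.count (net.Fires ζ' cfg u) T = Nat.count (net.Fires ζ cfg u) t := by
    intro u hadj
    have hbT : b u ≤ T := (hB ⟨u, hadj.symm, rfl⟩).trans (le_max_right a B)
    refine le_antisymm (not_lt.1 fun hgt => ?_)
      (hb u hadj.symm ▸ Nat.count_monotone _ hbT)
    obtain ⟨s, -, hs, hcs⟩ := Nat.exists_count_eq_of_lt_count hgt
    exact (hM.count_lt_of_neighbor_fires hor hv hadj hs hcs).not_ge (hbound s)
  have happ : net.Applicable (net.traj ζ' cfg T) v := fun u hadj => by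
    rw [← hor.traj_snd_eq_of_firingsMatch hadj (hTu u hadj).symm hTv.symm (hM u) (hM v)]
    exact hv.2 u hadj
  obtain ⟨s', -, hs', hcs'⟩ := hor.exists_fires_of_applicable ζ' hfair' happ
  exact hno s' hs' (hcs'.trans hTv)

theorem Oriented.firingsMatch_of_fires (hor : net.Oriented cfg) (hloc : net.IsLocal)
    (hlf : ∀ v, (net.G.neighborSet v).Finite) (hfair' : ∀ i, {t | i ∈ ζ' t}.Infinite)
    {t : ℕ} {v : I} (hv : net.Fires ζ cfg v t) :
    net.FiringsMatch ζ ζ' cfg v (Nat.count (net.Fires ζ cfg v) t) := by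
  induction t using Nat.strong_induction_on generalizing v with
  | _ t ih =>
  have hM : net.MatchedBefore ζ ζ' cfg t := fun w m hm => by
    obtain ⟨s, hst, hs, rfl⟩ := Nat.exists_count_eq_of_lt_count hm
    exact ih s hst hs
  obtain ⟨s', hv', hcv⟩ := hM.exists_fires_count_eq hor hlf hfair' hv
  have hnbr := fun u (hadj : net.G.Adj u v) => hM.count_neighbor_eq hor hv hv' hcv hadj
  have hstate : ∀ w, Nat.count (net.Fires ζ cfg w) t = Nat.count (net.Fires ζ' cfg w) s' →
      (net.traj ζ cfg t).1 w = (net.traj ζ' cfg s').1 w :=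
    fun w hw => traj_fst_eq_of_firingsMatch hw (hM w)
  have hrec : net.firingRecord ζ cfg v t = net.firingRecord ζ' cfg v s' :=
    Prod.ext (hstate v hcv.symm)
      (hloc v _ _ (hstate v hcv.symm) fun u hadj => hstate u (hnbr u hadj))
  exact ⟨t, s', hv, hv', rfl, hcv, hrec, hnbr⟩

variable {φ : S × S × (I → Bool) → Prop} {v : I}

theorem Oriented.firingIndices_subset (hor : net.Oriented cfg) (hloc : net.IsLocal)
    (hlf : ∀ v, (net.G.neighborSet v).Finite) (hfair' : ∀ i, {t | i ∈ ζ' t}.Infinite) :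
    net.firingIndices ζ cfg φ v ⊆ net.firingIndices ζ' cfg φ v := by
  rintro _ ⟨t, ht, rfl⟩
  exact ((hor.firingsMatch_of_fires hloc hlf hfair' ht.1).mem_firingIndices_iff φ).1
    ⟨t, ht, rfl⟩

theorem Oriented.traj_succ_nth_firesWith_eq {m : ℕ} (hor : net.Oriented cfg)
    (hloc : net.IsLocal) (hlf : ∀ v, (net.G.neighborSet v).Finite)
    (hfair' : ∀ i, {t | i ∈ ζ' t}.Infinite)
    (hK : net.firingIndices ζ cfg φ v = net.firingIndices ζ' cfg φ v)
    (h : HasAtLeast (net.FiresWith ζ cfg φ v) (m + 1))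
    (h' : HasAtLeast (net.FiresWith ζ' cfg φ v) (m + 1)) :
    (net.traj ζ cfg (Nat.nth (net.FiresWith ζ cfg φ v) m + 1)).1 v =
      (net.traj ζ' cfg (Nat.nth (net.FiresWith ζ' cfg φ v) m + 1)).1 v := by
  obtain ⟨hs, hcs⟩ := firesWith_nth_of_hasAtLeast ζ h
  obtain ⟨hs', hcs'⟩ := firesWith_nth_of_hasAtLeast ζ' h'
  obtain ⟨σ, σ', hσ, hσ', hcσ, hcσ', hrec, -⟩ :=
    hor.firingsMatch_of_fires hloc hlf hfair' hs.1
  obtain rfl := Nat.count_injective hσ hs.1 hcσ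
  obtain rfl := Nat.count_injective hσ' hs'.1 (by rw [hcσ', hcs, hcs', hK])
  rw [traj_succ_fst_apply_of_fires ζ hσ, traj_succ_fst_apply_of_fires ζ' hσ', hrec]

end TwoRuns

end FAN

/-- Flip automata networks have invariant histories: for any initial configuration, the
sequence of state values taken by each node (recording only actual changes, in order) is
the same for any two fair update schedules. -/
theorem fan_invariant_histories {I S : Type*} (net : FAN I S)
    (hloc : ∀ i (s s' : I → S), s i = s' i → (∀ u, net.G.Adj u i → s u = s' u) →
      net.flip i s = net.flip i s')
    (hlf : ∀ v, (net.G.neighborSet v).Finite)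
    (cfg : FanConfig I S)
    (hor : ∀ i j, net.G.Adj i j → cfg.2 i j = !cfg.2 j i)
    (ζ ζ' : ℕ → Set I)
    (hfair : ∀ i, {t | i ∈ ζ t}.Infinite)
    (hfair' : ∀ i, {t | i ∈ ζ' t}.Infinite)
    (i : I) (n : ℕ) :
    (HasAtLeast (fun t => (net.traj ζ cfg (t + 1)).1 i ≠ (net.traj ζ cfg t).1 i) n ↔
      HasAtLeast (fun t => (net.traj ζ' cfg (t + 1)).1 i ≠ (net.traj ζ' cfg t).1 i) n) ∧
    (HasAtLeast (fun t => (net.traj ζ cfg (t + 1)).1 i ≠ (net.traj ζ cfg t).1 i) n →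
      histVal (fun t => (net.traj ζ cfg t).1 i) n =
        histVal (fun t => (net.traj ζ' cfg t).1 i) n) := by
  set φ : S × S × (I → Bool) → Prop := fun r => r.2.1 ≠ r.1
  have hchange : ∀ ζ : ℕ → Set I, (fun t => (net.traj ζ cfg (t + 1)).1 i ≠
      (net.traj ζ cfg t).1 i) = net.FiresWith ζ cfg φ i :=
    fun ζ => funext fun t => propext (FAN.traj_succ_fst_ne_iff ζ t)
  have hK : net.firingIndices ζ cfg φ i = net.firingIndices ζ' cfg φ i :=
    (FAN.Oriented.firingIndices_subset hor hloc hlf hfair').antisymm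
      (FAN.Oriented.firingIndices_subset hor hloc hlf hfair)
  have hiff :
      HasAtLeast (net.FiresWith ζ cfg φ i) n ↔ HasAtLeast (net.FiresWith ζ' cfg φ i) n := by
    rw [← FAN.hasAtLeast_firingIndices_iff ζ, hK, FAN.hasAtLeast_firingIndices_iff ζ']
  rw [hchange, hchange]
  refine ⟨hiff, fun h => ?_⟩
  cases n with
  | zero => rfl
  | succ m =>
    simp only [histVal]
    rw [hchange, hchange]
    exact FAN.Oriented.traj_succ_nth_firesWith_eq hor hloc hlf hfair' hK h (hiff.1 h)
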